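/- arXiv:2010.14033 — 4 statements merged into one kernel-verified Lean document; each statement's English description precedes it below -/
import Mathlib

section
/- Let P be an m-partition of a finite set X and let f ∈ T(X,P). Then f is unit-regular in T(X,P) (i.e., there exists a bijection g ∈ S(X,P) with f = f∘g∘f) if and only if for each index i in the image of the character map χ^(f), there exists an index j with |X_i| = |X_j| and X_i ∩ Xf = X_j f. -/
/-- `B : ι → Set X` is a partition of `X` into nonempty pairwise disjoint blocks. -/
def IsPartition {X ι : Type*} (B : ι → Set X) : Prop :=
  (∀ i, (B i).Nonempty) ∧ (Pairwise fun i j => Disjoint (B i) (B j)) ∧ (⋃ i, B i) = Set.univ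

/-- membership in `T(X,P)`: every block maps into some block. -/
def MapsInto {X ι : Type*} (B : ι → Set X) (f : X → X) : Prop := ∀ i, ∃ j, f '' B i ⊆ B j

/-- membership in `Γ(X,P)`: every block maps onto some block. -/
def MapsOnto {X ι : Type*} (B : ι → Set X) (f : X → X) : Prop := ∀ i, ∃ j, f '' B i = B j

/-- membership in `Σ(X,P)`. -/
def InSigma {X ι : Type*} (B : ι → Set X) (f : X → X) : Prop :=
  MapsInto B f ∧ ∀ i, (Set.range f ∩ B i).Nonempty

/-- membership in `S(X,P)`, the group of units of `T(X,P)`. -/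
def IsUnitT {X ι : Type*} (B : ι → Set X) (f : X → X) : Prop :=
  MapsInto B f ∧ ∃ g, MapsInto B g ∧ f ∘ g = id ∧ g ∘ f = id

/-- Stirling numbers of the second kind. -/
def stirling2 : ℕ → ℕ → ℕ
  | 0, 0 => 1
  | 0, _ + 1 => 0
  | _ + 1, 0 => 0
  | n + 1, k + 1 => (k + 1) * stirling2 n (k + 1) + stirling2 n k

/-!
A unit `u` of `T(X,P)` permutes the blocks, `u '' B i = B (σ i)`. If `f u f = f` and `i` is in the
image of the character of `f`, then `j = σ i` works: `u` is injective, and `f '' B j` lies in a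
single block, which must be `B i` because `f (u (f z)) = f z`.

Conversely, the hypothesis yields an injective partial map `J` on the image of the character
preserving block sizes; extend it to a size-preserving permutation `σ` of the indices. Choosing for
each `y ∈ Xf` a preimage in `B (σ i)`, where `B i` is the block of `y`, gives an injective partial
section of `f`; extend it blockwise to bijections `B i → B (σ i)`. Both extensions are instances of
one counting fact: an injective partial map between finite sets, compatible with colourings whose
colour classes have matching sizes, extends to a colour-compatible bijection.
-/

open Set

theorem Set.InjOn.exists_equiv_extend_of_card_fiber_eq {α β γ : Type*} [Finite α] [Finite β]
    {c : α → γ} {c' : β → γ} (hcard : ∀ k, Nat.card {a // c a = k} = Nat.card {b // c' b = k})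
    {s : Set α} {p : α → β} (hp : s.InjOn p) (hps : ∀ a ∈ s, c' (p a) = c a) :
    ∃ e : α ≃ β, (∀ a ∈ s, e a = p a) ∧ ∀ a, c' (e a) = c a := by
  classical
  have := Fintype.ofFinite α
  have := Fintype.ofFinite β
  have hfiber : ∀ k, ∃ F : {a // c a = k} ≃ {b // c' b = k},
      ∀ a (ha : c a = k), a ∈ s → (F ⟨a, ha⟩ : β) = p a := by
    intro k
    obtain ⟨g, hg⟩ := MapsTo.exists_equiv_extend_of_card_eq (α := {a // c a = k})
      (t := {b | c' b = k}.toFinset) (s := {a | a.1 ∈ s}) (f := fun a => p a)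
      (by rw [toFinset_card, ← Nat.card_eq_fintype_card, ← Nat.card_eq_fintype_card]
          exact hcard k)
      (fun a ha => by simpa [hps a ha] using a.2)
      (fun a ha b hb hab => Subtype.ext (hp ha hb hab))
    exact ⟨g.trans (Equiv.subtypeEquivRight fun b => by simp), fun a ha has => hg ⟨a, ha⟩ has⟩
  choose F hF using hfiber
  refine ⟨(Equiv.sigmaFiberEquiv c).symm.trans
    ((Equiv.sigmaCongrRight F).trans (Equiv.sigmaFiberEquiv c')),
    fun a ha => hF _ a rfl ha, fun a => (F (c a) ⟨a, rfl⟩).2⟩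

theorem IsUnitT.injective {X ι : Type*} {B : ι → Set X} {u : X → X} (hu : IsUnitT B u) :
    Function.Injective u := by
  obtain ⟨-, g, -, -, hgu⟩ := hu
  exact Function.LeftInverse.injective (congrFun hgu)

namespace IsPartition

variable {X ι : Type*} {B : ι → Set X}

theorem eq_of_mem_of_mem (hB : IsPartition B) {x : X} {i j : ι} (hi : x ∈ B i) (hj : x ∈ B j) :
    i = j := by
  by_contra hij
  exact disjoint_left.mp (hB.2.1 hij) hi hj

theorem exists_mem (hB : IsPartition B) (x : X) : ∃ i, x ∈ B i :=
  mem_iUnion.mp (hB.2.2 ▸ mem_univ x)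

noncomputable def index (hB : IsPartition B) (x : X) : ι := (hB.exists_mem x).choose

theorem mem_index (hB : IsPartition B) (x : X) : x ∈ B (hB.index x) :=
  (hB.exists_mem x).choose_spec

theorem index_eq_iff (hB : IsPartition B) {x : X} {i : ι} : hB.index x = i ↔ x ∈ B i :=
  ⟨fun h => h ▸ hB.mem_index x, hB.eq_of_mem_of_mem (hB.mem_index x)⟩

theorem card_index_fiber (hB : IsPartition B) (i : ι) :
    Nat.card {x // hB.index x = i} = Nat.card (B i) :=
  Nat.card_congr (Equiv.subtypeEquivRight fun _ => hB.index_eq_iff)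

theorem image_subset_index_apply (hB : IsPartition B) {f : X → X} (hf : MapsInto B f) (x : X) :
    f '' B (hB.index x) ⊆ B (hB.index (f x)) := by
  obtain ⟨k, hk⟩ := hf (hB.index x)
  rwa [hB.index_eq_iff.2 (hk ⟨x, hB.mem_index x, rfl⟩)]

theorem mapsInto_of_index_apply (hB : IsPartition B) {u : X → X} {τ : ι → ι}
    (h : ∀ x, hB.index (u x) = τ (hB.index x)) : MapsInto B u := by
  refine fun i => ⟨τ i, ?_⟩
  rintro _ ⟨x, hx, rfl⟩
  rw [← hB.index_eq_iff, h, hB.index_eq_iff.2 hx]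

theorem isUnitT_of_index_apply (hB : IsPartition B) (u : X ≃ X) (σ : Equiv.Perm ι)
    (h : ∀ x, hB.index (u x) = σ (hB.index x)) : IsUnitT B u := by
  have hsymm : ∀ y, hB.index (u.symm y) = σ.symm (hB.index y) := fun y => by
    rw [Equiv.eq_symm_apply, ← h, u.apply_symm_apply]
  exact ⟨hB.mapsInto_of_index_apply h, u.symm, hB.mapsInto_of_index_apply hsymm,
    u.self_comp_symm, u.symm_comp_self⟩

theorem mapsOnto_of_isUnitT (hB : IsPartition B) {u : X → X} (hu : IsUnitT B u) :
    MapsOnto B u := by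
  obtain ⟨hu, g, hg, hug, hgu⟩ := hu
  intro k
  obtain ⟨k', hk'⟩ := hu k
  obtain ⟨k'', hk''⟩ := hg k'
  obtain ⟨x, hx⟩ := hB.1 k
  have hk : k'' = k :=
    hB.eq_of_mem_of_mem (hk'' ⟨u x, hk' ⟨x, hx, rfl⟩, congrFun hgu x⟩) hx
  exact ⟨k', hk'.antisymm fun y hy => ⟨g y, hk ▸ hk'' ⟨y, hy, rfl⟩, congrFun hug y⟩⟩

theorem exists_block_of_unitRegular (hB : IsPartition B) {f u : X → X} (hf : MapsInto B f)
    (hu : IsUnitT B u) (hfuf : f ∘ u ∘ f = f) {i l : ι} (hl : f '' B l ⊆ B i) :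
    ∃ j, Nat.card (B i) = Nat.card (B j) ∧ B i ∩ range f = f '' B j := by
  have hfuf' : ∀ x, f (u (f x)) = f x := congrFun hfuf
  obtain ⟨j, hj⟩ := hB.mapsOnto_of_isUnitT hu i
  refine ⟨j, by rw [← hj, Nat.card_image_of_injective hu.injective], ?_⟩
  apply subset_antisymm
  · rintro _ ⟨hy, x, rfl⟩
    exact ⟨u (f x), hj ▸ mem_image_of_mem u hy, hfuf' x⟩
  · obtain ⟨k, hk⟩ := hf j
    obtain ⟨z, hz⟩ := hB.1 l
    have hzi : f z ∈ B i := hl ⟨z, hz, rfl⟩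
    have hki : k = i :=
      hB.eq_of_mem_of_mem (hfuf' z ▸ hk ⟨u (f z), hj ▸ mem_image_of_mem u hzi, rfl⟩) hzi
    exact fun y hy => ⟨hki ▸ hk hy, image_subset_range f _ hy⟩

theorem exists_perm_of_forall_exists_block [Finite ι] (hB : IsPartition B) {f : X → X}
    (h : ∀ i, (∃ l, f '' B l ⊆ B i) →
      ∃ j, Nat.card (B i) = Nat.card (B j) ∧ B i ∩ range f = f '' B j) :
    ∃ σ : Equiv.Perm ι, (∀ i, Nat.card (B (σ i)) = Nat.card (B i)) ∧
      ∀ i, (∃ l, f '' B l ⊆ B i) → B i ∩ range f = f '' B (σ i) := by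
  choose! J hJcard hJ using h
  have hJinj : InjOn J {i | ∃ l, f '' B l ⊆ B i} := by
    rintro a ⟨l, hl⟩ b hb hab
    obtain ⟨x, hx⟩ := hB.1 l
    have hxa : f x ∈ B a ∩ range f := ⟨hl ⟨x, hx, rfl⟩, x, rfl⟩
    rw [hJ a ⟨l, hl⟩, hab, ← hJ b hb] at hxa
    exact hB.eq_of_mem_of_mem (hl ⟨x, hx, rfl⟩) hxa.1
  obtain ⟨σ, hσJ, hσcard⟩ := hJinj.exists_equiv_extend_of_card_fiber_eq
    (c := fun i => Nat.card (B i)) (c' := fun i => Nat.card (B i)) (fun _ => rfl)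
    (fun i hi => (hJcard i hi).symm)
  exact ⟨σ, hσcard, fun i hi => hσJ i hi ▸ hJ i hi⟩

theorem exists_unitRegular_of_forall_exists_block [Finite X] [Finite ι] (hB : IsPartition B)
    {f : X → X} (hf : MapsInto B f)
    (h : ∀ i, (∃ l, f '' B l ⊆ B i) →
      ∃ j, Nat.card (B i) = Nat.card (B j) ∧ B i ∩ range f = f '' B j) :
    ∃ u, IsUnitT B u ∧ f ∘ u ∘ f = f := by
  obtain ⟨σ, hσcard, hσ⟩ := hB.exists_perm_of_forall_exists_block h
  have hsection : ∀ y ∈ range f, ∃ x ∈ B (σ (hB.index y)), f x = y := by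
    rintro _ ⟨x, rfl⟩
    have hx : f x ∈ B (hB.index (f x)) ∩ range f := ⟨hB.mem_index _, x, rfl⟩
    rwa [hσ _ ⟨_, hB.image_subset_index_apply hf x⟩] at hx
  choose! v hvB hfv using hsection
  have hvinj : InjOn v (range f) := fun a ha b hb hab => by
    rw [← hfv a ha, ← hfv b hb, hab]
  have hcard : ∀ k, Nat.card {x // σ (hB.index x) = k} = Nat.card {x // hB.index x = k} := by
    intro k
    calc Nat.card {x // σ (hB.index x) = k} = Nat.card (B (σ.symm k)) :=
          Nat.card_congr (Equiv.subtypeEquivRight fun _ => by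
            rw [← Equiv.eq_symm_apply, hB.index_eq_iff])
      _ = Nat.card (B k) := by rw [← hσcard, σ.apply_symm_apply]
      _ = Nat.card {x // hB.index x = k} := (hB.card_index_fiber k).symm
  obtain ⟨u, hu, hidx⟩ := hvinj.exists_equiv_extend_of_card_fiber_eq
    (c := fun x => σ (hB.index x)) (c' := hB.index) hcard
    (fun y hy => hB.index_eq_iff.2 (hvB y hy))
  refine ⟨u, hB.isUnitT_of_index_apply u σ hidx, funext fun x => ?_⟩
  simp only [Function.comp_apply, hu _ (mem_range_self x), hfv _ (mem_range_self x)]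

end IsPartition

/-- Characterization of unit-regular elements of T(X,P) for finite X. -/
theorem unitRegular_iff_T {X : Type*} [Finite X] {m : ℕ} (B : Fin m → Set X)
    (hP : IsPartition B) (f : X → X) (hf : MapsInto B f) :
    (∃ u, IsUnitT B u ∧ f ∘ u ∘ f = f) ↔
      ∀ i, (∃ l, f '' B l ⊆ B i) →
        ∃ j, Nat.card (B i) = Nat.card (B j) ∧ B i ∩ Set.range f = f '' B j := by
  constructor
  · rintro ⟨u, hu, hfuf⟩ i ⟨l, hl⟩
    exact hP.exists_block_of_unitRegular hf hu hfuf hl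
  · exact hP.exists_unitRegular_of_forall_exists_block hf
end

section
/- Let P be an m-partition of a finite set X and let f ∈ Σ(X,P). Then f is unit-regular in T(X,P) if and only if |X_i| = |X_j| whenever i χ^(f) = j. -/
/-! The hypothesis `f ∈ Σ(X,P)` makes the character `χ` of `f` a surjective, hence bijective,
map of the finitely many blocks. A unit `u` of `T(X,P)` is a bijection permuting the blocks; if
`f u f = f`, then `u` carries `X_j` onto the unique block `X_i` with `i χ = j`, so `|X_i| = |X_j|`.
Conversely, if these cardinalities agree, choose on each block `X_j` a bijection onto `X_{j χ⁻¹}`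
extending a section of `f` over `f(X_{j χ⁻¹})`; glued together, these form a unit `u` of `T(X,P)`
with `f u f = f`. -/

namespace Set

variable {α β : Type*} [Finite α] [Finite β]

theorem InjOn.exists_bijOn_extend {φ : α → β} {s a : Set α} {b : Set β} (hinj : InjOn φ s)
    (hsa : s ⊆ a) (hφ : MapsTo φ s b) (hab : a.ncard = b.ncard) :
    ∃ ψ : α → β, BijOn ψ a b ∧ EqOn ψ φ s := by
  classical
  rcases isEmpty_or_nonempty β with hβ | hβ
  · have hb : b = ∅ := eq_empty_of_isEmpty b
    have ha : a = ∅ := (ncard_eq_zero).1 (by simpa [hb] using hab)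
    exact ⟨φ, by simp [ha, hb], fun _ _ => rfl⟩
  have hφs : φ '' s ⊆ b := image_subset_iff.2 hφ
  have hcard : (a \ s).encard = (b \ φ '' s).encard := by
    rw [← (toFinite _).cast_ncard_eq, ← (toFinite _).cast_ncard_eq, ncard_sdiff hsa,
      ncard_sdiff hφs, hinj.ncard_image, hab]
  obtain ⟨ψ₀, hψ₀⟩ := (toFinite (a \ s)).exists_bijOn_of_encard_eq hcard
  have hs : BijOn (s.piecewise φ ψ₀) s (φ '' s) :=
    hinj.bijOn_image.congr (piecewise_eqOn s φ ψ₀).symm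
  have hrest : BijOn (s.piecewise φ ψ₀) (a \ s) (b \ φ '' s) :=
    hψ₀.congr fun x hx => (piecewise_eqOn_compl s φ ψ₀ hx.2).symm
  have hunion := hs.union hrest <| (injOn_union disjoint_sdiff_right).2
    ⟨hs.injOn, hrest.injOn, fun x hx y hy hxy => (hrest.mapsTo hy).2 (hxy ▸ hs.mapsTo hx)⟩
  rw [union_sdiff_cancel hsa, union_sdiff_cancel hφs] at hunion
  exact ⟨_, hunion, piecewise_eqOn s φ ψ₀⟩

theorem MapsTo.exists_bijOn_rightInvOn [Nonempty α] {f : α → β} {a : Set α} {b : Set β}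
    (hf : MapsTo f a b) (hab : a.ncard = b.ncard) :
    ∃ ψ : β → α, BijOn ψ b a ∧ RightInvOn ψ f (f '' a) := by
  have hsurj : SurjOn f a (f '' a) := surjOn_image f a
  obtain ⟨ψ, hψ, hψeq⟩ := (Function.invFunOn_injOn_image f a).exists_bijOn_extend
    (image_subset_iff.2 hf) hsurj.mapsTo_invFunOn hab.symm
  exact ⟨ψ, hψ, fun y hy => by rw [hψeq hy]; exact hsurj.rightInvOn_invFunOn hy⟩

end Set

open Set Function

section Partition

variable {X ι : Type*} {B : ι → Set X}

theorem IsPartition.eq_of_mem (hP : IsPartition B) {x : X} {i j : ι} (hi : x ∈ B i)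
    (hj : x ∈ B j) : i = j :=
  by_contra fun hij => disjoint_left.1 (hP.2.1 hij) hi hj

theorem IsPartition.exists_mem_s2 (hP : IsPartition B) (x : X) : ∃ i, x ∈ B i :=
  mem_iUnion.1 (hP.2.2 ▸ mem_univ x)

theorem IsPartition.eq_of_image_subset (hP : IsPartition B) {f : X → X} {i j j' : ι}
    (hj : f '' B i ⊆ B j) (hj' : f '' B i ⊆ B j') : j = j' := by
  obtain ⟨x, hx⟩ := hP.1 i
  exact hP.eq_of_mem (hj (mem_image_of_mem f hx)) (hj' (mem_image_of_mem f hx))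

theorem IsPartition.exists_eqOn {β : Type*} (hP : IsPartition B) (v : ι → X → β) :
    ∃ u : X → β, ∀ j, EqOn u (v j) (B j) := by
  choose idx hidx using hP.exists_mem_s2
  exact ⟨fun x => v (idx x) x, fun j x hx => congrArg (v · x) (hP.eq_of_mem (hidx x) hx)⟩

theorem IsPartition.bijective_of_bijOn (hP : IsPartition B) {u : X → X} (τ : ι ≃ ι)
    (hu : ∀ j, BijOn u (B j) (B (τ j))) : Bijective u := by
  refine ⟨fun x y hxy => ?_, fun z => ?_⟩
  · obtain ⟨i, hx⟩ := hP.exists_mem_s2 x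
    obtain ⟨j, hy⟩ := hP.exists_mem_s2 y
    have hij : i = j := τ.injective <|
      hP.eq_of_mem ((hu i).mapsTo hx) (hxy ▸ (hu j).mapsTo hy)
    exact (hu i).injOn hx (hij ▸ hy) hxy
  · obtain ⟨k, hz⟩ := hP.exists_mem_s2 z
    obtain ⟨x, -, hx⟩ := (hu (τ.symm k)).surjOn (by rwa [τ.apply_symm_apply])
    exact ⟨x, hx⟩

theorem IsPartition.isUnitT_iff (hP : IsPartition B) {u : X → X} :
    IsUnitT B u ↔ Bijective u ∧ MapsOnto B u := by
  constructor
  · rintro ⟨hu, g, hg, hug, hgu⟩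
    refine ⟨bijective_iff_has_inverse.2 ⟨g, congrFun hgu, congrFun hug⟩, fun k => ?_⟩
    obtain ⟨k', hk'⟩ := hu k
    obtain ⟨k'', hk''⟩ := hg k'
    obtain ⟨x, hx⟩ := hP.1 k
    have hk : k'' = k := hP.eq_of_mem
      (hk'' ⟨u x, hk' (mem_image_of_mem u hx), congrFun hgu x⟩) hx
    refine ⟨k', hk'.antisymm fun z hz => ⟨g z, ?_, congrFun hug z⟩⟩
    exact hk ▸ hk'' (mem_image_of_mem g hz)
  · rintro ⟨hu, hon⟩
    let e := Equiv.ofBijective u hu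
    refine ⟨fun k => (hon k).imp fun _ h => h.subset, e.symm,
      fun k => ?_, funext e.apply_symm_apply, funext e.symm_apply_apply⟩
    obtain ⟨z, hz⟩ := hP.1 k
    obtain ⟨j, hj⟩ := hP.exists_mem_s2 (e.symm z)
    obtain ⟨k', hk'⟩ := hon j
    have hk : k' = k := hP.eq_of_mem (hk' ▸ e.apply_symm_apply z ▸ mem_image_of_mem u hj) hz
    refine ⟨j, ?_⟩
    rintro _ ⟨_, hw, rfl⟩
    obtain ⟨y, hy, rfl⟩ := (hk ▸ hk').symm ▸ hw
    rwa [show e.symm (u y) = y from e.symm_apply_apply y]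

end Partition

section Sigma

variable {X ι : Type*} {B : ι → Set X} {f : X → X}

def IsUnitRegularT (B : ι → Set X) (f : X → X) : Prop :=
  ∃ u, IsUnitT B u ∧ f ∘ u ∘ f = f

theorem InSigma.exists_equiv_image_subset_iff [Finite ι] (hf : InSigma B f)
    (hP : IsPartition B) : ∃ χ : ι ≃ ι, ∀ i j, f '' B i ⊆ B j ↔ χ i = j := by
  choose χ hχ using hf.1
  have hsurj : Surjective χ := by
    intro j
    obtain ⟨_, ⟨x, rfl⟩, hx⟩ := hf.2 j
    obtain ⟨i, hi⟩ := hP.exists_mem_s2 x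
    exact ⟨i, hP.eq_of_mem (hχ i (mem_image_of_mem f hi)) hx⟩
  refine ⟨Equiv.ofBijective χ ⟨Finite.injective_iff_surjective.2 hsurj, hsurj⟩, fun i j => ?_⟩
  exact ⟨hP.eq_of_image_subset (hχ i), fun hij => hij ▸ hχ i⟩

theorem InSigma.ncard_eq_of_isUnitRegularT [Finite ι] (hf : InSigma B f) (hP : IsPartition B)
    (hreg : IsUnitRegularT B f) {i j : ι} (hij : f '' B i ⊆ B j) :
    (B i).ncard = (B j).ncard := by
  obtain ⟨u, hu, hfuf⟩ := hreg
  obtain ⟨χ, hχ⟩ := hf.exists_equiv_image_subset_iff hP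
  obtain ⟨hbij, hon⟩ := hP.isUnitT_iff.1 hu
  obtain ⟨k, hk⟩ := hon j
  have hkj : χ k = j := by
    obtain ⟨_, ⟨x, rfl⟩, hx⟩ := hf.2 j
    have hux : u (f x) ∈ B k := hk ▸ mem_image_of_mem u hx
    have hfux : f (u (f x)) ∈ B j := by rwa [show f (u (f x)) = f x from congrFun hfuf x]
    exact hP.eq_of_mem ((hχ k _).2 rfl (mem_image_of_mem f hux)) hfux
  have hki : k = i := χ.injective (hkj.trans ((hχ i j).1 hij).symm)
  rw [← hki, ← hk, ncard_image_of_injective _ hbij.1]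

theorem InSigma.isUnitRegularT_of_ncard_eq [Finite X] [Finite ι] (hf : InSigma B f)
    (hP : IsPartition B) (hcard : ∀ i j, f '' B i ⊆ B j → (B i).ncard = (B j).ncard) :
    IsUnitRegularT B f := by
  obtain ⟨χ, hχ⟩ := hf.exists_equiv_image_subset_iff hP
  have hblock : ∀ j, ∃ v : X → X,
      BijOn v (B j) (B (χ.symm j)) ∧ RightInvOn v f (f '' B (χ.symm j)) := by
    intro j
    have : Nonempty X := ⟨(hP.1 j).some⟩
    have hmaps : MapsTo f (B (χ.symm j)) (B j) :=
      image_subset_iff.1 ((hχ _ _).2 (χ.apply_symm_apply j))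
    exact hmaps.exists_bijOn_rightInvOn (hcard _ _ (image_subset_iff.2 hmaps))
  choose v hv hvf using hblock
  obtain ⟨u, hu⟩ := hP.exists_eqOn v
  have hbijOn : ∀ j, BijOn u (B j) (B (χ.symm j)) := fun j => (hv j).congr (hu j).symm
  refine ⟨u, hP.isUnitT_iff.2 ⟨hP.bijective_of_bijOn χ.symm hbijOn,
    fun j => ⟨_, (hbijOn j).image_eq⟩⟩, funext fun x => ?_⟩
  obtain ⟨i, hi⟩ := hP.exists_mem_s2 x
  have hfx : f x ∈ B (χ i) := (hχ i _).2 rfl (mem_image_of_mem f hi)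
  have hfx' : f x ∈ f '' B (χ.symm (χ i)) := by
    rw [χ.symm_apply_apply]
    exact mem_image_of_mem f hi
  show f (u (f x)) = f x
  rw [hu _ hfx]
  exact hvf _ hfx'

end Sigma

/-- Characterization of unit-regular elements of Σ(X,P) for finite X. -/
theorem unitRegular_iff_Sigma {X : Type*} [Finite X] {m : ℕ} (B : Fin m → Set X)
    (hP : IsPartition B) (f : X → X) (hf : InSigma B f) :
    (∃ u, IsUnitT B u ∧ f ∘ u ∘ f = f) ↔
      ∀ i j, f '' B i ⊆ B j → Nat.card (B i) = Nat.card (B j) := by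
  simp only [Nat.card_coe_set_eq]
  exact ⟨fun hreg _ _ hij => hf.ncard_eq_of_isUnitRegularT hP hreg hij,
    hf.isUnitRegularT_of_ncard_eq hP⟩
end

section
/- Let P be an m-partition of a finite set X. Then every regular element of Γ(X,P) is unit-regular: if f ∈ Γ(X,P) and f = f g f for some g ∈ Γ(X,P), then there exists a unit u ∈ S(X,P) with f = f u f. -/
/-! If `f = f g f` with `f, g ∈ Γ(X,P)`, then `f ∘ g` fixes the range of `f`, which is a union of
blocks; so `g` maps each of these blocks bijectively onto a block, and distinct ones onto distinct
blocks. This injective, size-preserving assignment of blocks extends to a size-preserving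
permutation of all blocks, and gluing `g` with arbitrary bijections between the remaining matched
blocks gives a unit `u ∈ S(X,P)` that agrees with `g` on the range of `f`, whence
`f u f = f g f = f`. -/

open Set Function

theorem Set.InjOn.exists_perm_eqOn_of_comp_eq {α β : Type*} {w : α → β} {t : α → α} {S : Set α}
    (hS : S.Finite) (ht : InjOn t S) (hw : ∀ k ∈ S, w (t k) = w k) :
    ∃ π : Equiv.Perm α, EqOn π t S ∧ w ∘ π = w := by
  classical
  induction S, hS using Set.Finite.induction_on with
  | empty => exact ⟨1, eqOn_empty _ _, rfl⟩
  | @insert a S ha _ ih =>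
    obtain ⟨π, hπt, hπw⟩ :=
      ih (ht.mono (subset_insert a S)) fun k hk => hw k (mem_insert_of_mem a hk)
    set b := π.symm (t a)
    have hb : b ∉ S := fun hb => ha <| by
      have hab : t b = t a := by rw [← hπt hb, π.apply_symm_apply]
      exact ht (mem_insert_of_mem a hb) (mem_insert a S) hab ▸ hb
    have hwb : w b = w a := by
      rw [← congrFun hπw b, comp_apply, π.apply_symm_apply, hw a (mem_insert a S)]
    refine ⟨π * Equiv.swap a b, ?_, ?_⟩
    · rintro k (rfl | hk)
      · simp [b]
      · rw [Equiv.Perm.mul_apply, Equiv.swap_apply_of_ne_of_ne (ne_of_mem_of_not_mem hk ha)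
          (ne_of_mem_of_not_mem hk hb), hπt hk]
    · ext k
      rw [comp_apply, Equiv.Perm.mul_apply, ← comp_apply (f := w), hπw, Equiv.swap_apply_def]
      split_ifs with hka hkb
      · rw [hwb, hka]
      · rw [← hwb, hkb]
      · rfl

theorem Set.leftInvOn_range_of_comp_comp_eq {α β : Type*} {f : α → β} {g : β → α}
    (h : f ∘ g ∘ f = f) :
    LeftInvOn f g (range f) := by
  rintro _ ⟨x, rfl⟩
  exact congrFun h x

namespace IsPartition

variable {X ι : Type*} {B : ι → Set X}

noncomputable def indexedPartition (hP : IsPartition B) : IndexedPartition B :=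
  .mk' B hP.2.1 hP.1 fun x => mem_iUnion.mp (hP.2.2 ▸ mem_univ x)

theorem injective (hP : IsPartition B) : Injective B := fun i _ h =>
  let P := hP.indexedPartition
  P.eq_of_mem (P.some_mem i) (h ▸ P.some_mem i)

theorem comp_perm (hP : IsPartition B) (π : Equiv.Perm ι) : IsPartition (B ∘ π) :=
  ⟨fun i => hP.1 (π i), fun _ _ h => hP.2.1 (π.injective.ne h), by
    rw [← hP.2.2]; exact π.surjective.iUnion_comp B⟩

theorem exists_isUnitT_eqOn (hP : IsPartition B) (π : Equiv.Perm ι) (φ : ι → X → X)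
    (hφ : ∀ i, BijOn (φ i) (B i) (B (π i))) : ∃ u, IsUnitT B u ∧ ∀ i, EqOn u (φ i) (B i) := by
  set P := hP.indexedPartition
  have hu : ∀ i, EqOn (P.piecewise φ) (φ i) (B i) := fun i x hx => by
    rw [P.piecewise_apply, P.mem_iff_index_eq.mp hx]
  have hbij : Bijective (P.piecewise φ) := P.piecewise_bij (hP.comp_perm π).indexedPartition hφ
  let e := Equiv.ofBijective _ hbij
  have himage : ∀ i, e '' B i = B (π i) := fun i => ((hφ i).congr (hu i).symm).image_eq
  refine ⟨e, ⟨fun i => ⟨π i, (himage i).le⟩, e.symm, fun j => ⟨π.symm j, ?_⟩,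
    funext e.apply_symm_apply, funext e.symm_apply_apply⟩, hu⟩
  rw [← π.apply_symm_apply j, ← himage, e.symm_image_image, π.apply_symm_apply]

theorem exists_mem_subset_range_of_mapsOnto (hP : IsPartition B) {f : X → X}
    (hf : MapsOnto B f) (x : X) : ∃ j, f x ∈ B j ∧ B j ⊆ range f := by
  let P := hP.indexedPartition
  obtain ⟨j, hj⟩ := hf (P.index x)
  exact ⟨j, hj ▸ mem_image_of_mem f (P.mem_index x), hj ▸ image_subset_range f _⟩

theorem exists_isUnitT_comp_comp_eq [Finite ι] (hP : IsPartition B) (hfin : ∀ i, (B i).Finite)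
    {f g : X → X} (hf : MapsOnto B f) (hg : MapsOnto B g) (hfgf : f ∘ g ∘ f = f) :
    ∃ u, IsUnitT B u ∧ f ∘ u ∘ f = f := by
  choose τ hτ using hg
  set R := {i | B i ⊆ range f}
  have hinv := leftInvOn_range_of_comp_comp_eq hfgf
  have hbij : ∀ i ∈ R, BijOn g (B i) (B (τ i)) := fun i hi =>
    hτ i ▸ (hinv.injOn.mono hi).bijOn_image
  have hτinj : InjOn τ R := fun i hi j hj hij => hP.injective <| by
    rw [← (hinv.mono hi).image_image, hτ, hij, ← hτ, (hinv.mono hj).image_image]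
  obtain ⟨π, hπ, hπw⟩ := hτinj.exists_perm_eqOn_of_comp_eq (w := fun i => (B i).encard)
    (toFinite R) fun i hi => hτ i ▸ (hinv.injOn.mono hi).encard_image
  have hφ : ∀ i, ∃ φ : X → X, BijOn φ (B i) (B (π i)) ∧ (i ∈ R → EqOn φ g (B i)) := by
    intro i
    by_cases hi : i ∈ R
    · exact ⟨g, hπ hi ▸ hbij i hi, fun _ => eqOn_refl _ _⟩
    · have : Nonempty X := ⟨(hP.1 i).some⟩
      obtain ⟨φ, hφi⟩ := (hfin i).exists_bijOn_of_encard_eq (congrFun hπw i).symm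
      exact ⟨φ, hφi, fun hi' => absurd hi' hi⟩
  choose φ hφ hφg using hφ
  obtain ⟨u, hu, huφ⟩ := hP.exists_isUnitT_eqOn π φ hφ
  refine ⟨u, hu, funext fun x => ?_⟩
  obtain ⟨j, hfx, hj⟩ := hP.exists_mem_subset_range_of_mapsOnto hf x
  change f (u (f x)) = f x
  rw [huφ j hfx, hφg j hj hfx]
  exact congrFun hfgf x

end IsPartition

/-- For finite X, every regular element of Γ(X,P) is unit-regular. -/
theorem gamma_regular_is_unitRegular {X : Type*} [Finite X] {m : ℕ} (B : Fin m → Set X)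
    (hP : IsPartition B) (f : X → X) (hf : MapsOnto B f)
    (hreg : ∃ g, MapsOnto B g ∧ f ∘ g ∘ f = f) :
    ∃ u, IsUnitT B u ∧ f ∘ u ∘ f = f := by
  obtain ⟨g, hg, hfgf⟩ := hreg
  exact hP.exists_isUnitT_comp_comp_eq (fun _ => toFinite _) hf hg hfgf
end

section
/- Let P be an (m,k)-partition of a finite set X with m_i blocks of size n_i for each i ∈ {1,...,k}, where n_1 < n_2 < ... < n_k and m = m_1 + ... + m_k. Then the number of self-maps of X mapping every block onto a block equals |Γ(X,P)| = ∏_{i=1}^{k} ( Σ_{j=1}^{i} m_j · n_j! · S(n_i, n_j) )^{m_i}, where S(a,b) is the Stirling number of the second kind. -/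
/-!
A map in `Γ(X,P)` amounts to an independent choice, for every block `b`, of a target block
`b'` and a surjection `b → b'`. Splitting a surjection `Fin (m + 1) → β` on its value at `0`
shows that the number of surjections from an `m`-set onto a `c`-set satisfies the recursion of
`c! * S(m, c)`. Since `S(n_i, n_j) = 0` for `n_i < n_j`, only the blocks of size at most `n_i`
contribute to the factor of a block of size `n_i`.
-/

open Function Set Nat

theorem stirling2_eq_stirlingSecond : stirling2 = stirlingSecond := by
  funext n k
  induction n, k using stirling2.induct <;> simp [stirling2, stirlingSecond_succ_succ, *]

section Surjections

variable {α β : Type*}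

def rangeEqEquivSurjective (s : Set β) :
    {f : α → β // range f = s} ≃ {g : α → s // Surjective g} where
  toFun f := ⟨codRestrict f.1 s fun a => f.2.subset (mem_range_self a), fun b => by
    obtain ⟨a, ha⟩ : (b : β) ∈ range f.1 := f.2.symm ▸ b.2
    exact ⟨a, Subtype.ext ha⟩⟩
  invFun g := ⟨Subtype.val ∘ g.1, by
    rw [range_comp, g.2.range_eq, image_univ, Subtype.range_coe]⟩
  left_inv _ := rfl
  right_inv _ := rfl

lemma Fin.surjective_cons_iff {m : ℕ} {y : β} {h : Fin m → β} :
    Surjective (Fin.cons y h : Fin (m + 1) → β) ↔ {y}ᶜ ⊆ range h := by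
  rw [← range_eq_univ, Fin.range_cons, insert_eq, ← compl_subset_iff_union]

lemma Set.compl_singleton_subset_iff {s : Set β} {y : β} :
    {y}ᶜ ⊆ s ↔ s = univ ∨ s = {y}ᶜ := by
  refine ⟨fun h => ?_, by rintro (rfl | rfl) <;> simp⟩
  by_cases hy : y ∈ s
  · exact .inl (eq_univ_of_forall fun x => (eq_or_ne x y).elim (· ▸ hy) (@h x))
  · exact .inr (h.antisymm' fun x hx hxy => hy (hxy ▸ hx))

lemma Nat.card_compl_singleton [Finite β] (y : β) :
    Nat.card ({y}ᶜ : Set β) + 1 = Nat.card β := by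
  rw [Nat.card_coe_set_eq, ← ncard_singleton y, Set.ncard_compl_add_ncard]

lemma Nat.card_surjective_fin_succ [Fintype β] (m : ℕ) :
    Nat.card {f : Fin (m + 1) → β // Surjective f} =
      ∑ y, Nat.card {h : Fin m → β // {y}ᶜ ⊆ range h} := by
  rw [← Nat.card_sigma]
  exact Nat.card_congr ((((Fin.consEquiv fun _ => β).subtypeEquiv
    fun _ => Fin.surjective_cons_iff.symm).symm.trans
      (Equiv.subtypeProdEquivSigmaSubtype fun y h => {y}ᶜ ⊆ range h)))

lemma Nat.card_compl_singleton_subset_range [Finite α] [Finite β] (y : β) :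
    Nat.card {h : α → β // {y}ᶜ ⊆ range h} =
      Nat.card {h : α → β // range h = univ} +
        Nat.card {h : α → β // range h = {y}ᶜ} := by
  classical
  have hdisj : Disjoint (fun h : α → β => range h = univ) (fun h => range h = {y}ᶜ) :=
    le_compl_iff_disjoint_right.mp fun h hu hc => by
      rw [hu] at hc
      exact (hc ▸ mem_univ y : y ∈ ({y}ᶜ : Set β)) rfl
  simp_rw [compl_singleton_subset_iff]
  rw [Nat.card_congr (subtypeOrEquiv _ _ hdisj), Nat.card_sum]

theorem Nat.card_surjective_fin (m : ℕ) (β : Type*) [Finite β] :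
    Nat.card {f : Fin m → β // Surjective f} =
      (Nat.card β)! * stirlingSecond m (Nat.card β) := by
  induction m generalizing β with
  | zero =>
    obtain hβ | hβ := isEmpty_or_nonempty β
    · have : Unique {f : Fin 0 → β // Surjective f} :=
        ⟨⟨⟨finZeroElim, isEmptyElim⟩⟩, fun _ => Subsingleton.elim _ _⟩
      simp
    · have : IsEmpty {f : Fin 0 → β // Surjective f} :=
        ⟨fun f => (f.2 (Classical.arbitrary β)).choose.elim0⟩
      obtain ⟨c, hc⟩ := Nat.exists_eq_succ_of_ne_zero (Nat.card_pos (α := β)).ne'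
      simp [hc]
  | succ m ih =>
    have := Fintype.ofFinite β
    obtain hβ | hβ := isEmpty_or_nonempty β
    · simp
    obtain ⟨c, hc⟩ := Nat.exists_eq_succ_of_ne_zero (Nat.card_pos (α := β)).ne'
    have hfiber (y : β) : Nat.card {h : Fin m → β // {y}ᶜ ⊆ range h} =
        (c + 1)! * stirlingSecond m (c + 1) + c ! * stirlingSecond m c := by
      have hcompl : Nat.card ({y}ᶜ : Set β) = c := by
        have := Nat.card_compl_singleton y; omega
      simp_rw [Nat.card_compl_singleton_subset_range, range_eq_univ,
        Nat.card_congr (rangeEqEquivSurjective _), ih, hcompl, hc]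
    simp_rw [Nat.card_surjective_fin_succ, hfiber, Finset.sum_const, Finset.card_univ,
      ← Nat.card_eq_fintype_card, hc, succ_eq_add_one, stirlingSecond_succ_succ, factorial_succ]
    ring

theorem Nat.card_surjective (α β : Type*) [Finite α] [Finite β] :
    Nat.card {f : α → β // Surjective f} =
      (Nat.card β)! * stirlingSecond (Nat.card α) (Nat.card β) := by
  rw [← Nat.card_surjective_fin]
  exact Nat.card_congr (((Finite.equivFin α).arrowCongr (.refl β)).subtypeEquiv
    fun f => ((Finite.equivFin α).symm.surjective_comp f).symm)

theorem Nat.card_range_eq [Finite α] [Finite β] (s : Set β) :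
    Nat.card {f : α → β // range f = s} =
      (Nat.card s)! * stirlingSecond (Nat.card α) (Nat.card s) := by
  rw [Nat.card_congr (rangeEqEquivSurjective s), Nat.card_surjective]

end Surjections

theorem Nat.card_exists_eq_of_injective {α ι γ : Type*} [Finite α] [Fintype ι]
    (F : α → γ) {B : ι → γ} (hB : Injective B) :
    Nat.card {a // ∃ i, F a = B i} = ∑ i, Nat.card {a // F a = B i} := by
  rw [← Nat.card_sigma]
  refine (Nat.card_congr (.ofBijective (fun p => ⟨p.2, p.1, p.2.2⟩) ⟨?_, ?_⟩)).symm
  · rintro ⟨i, a, ha⟩ ⟨j, b, hb⟩ h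
    obtain rfl : a = b := congrArg Subtype.val h
    obtain rfl : i = j := hB (ha.symm.trans hb)
    rfl
  · rintro ⟨a, i, ha⟩
    exact ⟨⟨i, a, ha⟩, rfl⟩

namespace IndexedPartition

variable {α ι : Type*} {s : ι → Set α}

def restrictEquiv (hs : IndexedPartition s) (β : Type*) : (α → β) ≃ ∀ i, s i → β where
  toFun f i x := f x
  invFun g x := g (hs.index x) ⟨x, hs.mem_index x⟩
  left_inv _ := rfl
  right_inv g := funext₂ fun i ⟨x, hx⟩ => by obtain rfl := hs.mem_iff_index_eq.mp hx; rfl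

end IndexedPartition

section Partition

variable {X ι : Type*} {B : ι → Set X}

lemma IsPartition.injective_s14 (hP : IsPartition B) : Injective B := fun i j hij => by
  by_contra hne
  obtain ⟨x, hx⟩ := hP.1 i
  exact disjoint_left.mp (hP.2.1 hne) hx (hij ▸ hx)

noncomputable def IsPartition.toIndexedPartition (hP : IsPartition B) : IndexedPartition B :=
  .mk' B hP.2.1 hP.1 fun x => mem_iUnion.mp (hP.2.2.symm ▸ mem_univ x)

noncomputable def IsPartition.mapsOntoEquiv (hP : IsPartition B) :
    {f // MapsOnto B f} ≃ ∀ i, {g : B i → X // ∃ j, range g = B j} :=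
  ((hP.toIndexedPartition.restrictEquiv X).subtypeEquiv fun f => by
    simp only [MapsOnto, image_eq_range]; rfl).trans Equiv.subtypePiEquivPi

theorem IsPartition.card_mapsOnto [Finite X] [Fintype ι] (hP : IsPartition B) :
    Nat.card {f // MapsOnto B f} =
      ∏ i, ∑ j, (Nat.card (B j))! * stirlingSecond (Nat.card (B i)) (Nat.card (B j)) := by
  simp_rw [Nat.card_congr hP.mapsOntoEquiv, Nat.card_pi,
    Nat.card_exists_eq_of_injective _ hP.injective_s14, Nat.card_range_eq]

end Partition

/-- The size of Γ(X,P) for an (m,k)-partition P with m_i blocks of size n_i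
(n_1 < ⋯ < n_k). -/
theorem card_gamma {X : Type*} [Finite X] {k : ℕ} (n mcnt : Fin k → ℕ)
    (hmono : StrictMono n)
    (B : (Σ i : Fin k, Fin (mcnt i)) → Set X) (hP : IsPartition B)
    (hsize : ∀ i t, Nat.card (B ⟨i, t⟩) = n i) :
    Nat.card {f : X → X // MapsOnto B f} =
      ∏ i : Fin k,
        (∑ j ∈ Finset.Iic i, mcnt j * (n j).factorial * stirling2 (n i) (n j)) ^ mcnt i := by
  rw [hP.card_mapsOnto, Fintype.prod_sigma, stirling2_eq_stirlingSecond]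
  refine Finset.prod_congr rfl fun i _ => ?_
  simp only [hsize, Fintype.sum_sigma, Finset.sum_const, Finset.prod_const, Finset.card_univ,
    Fintype.card_fin, smul_eq_mul, mul_assoc]
  congr 1
  refine (Finset.sum_subset (Finset.subset_univ _) fun j _ hj => ?_).symm
  have hij : n i < n j := hmono (not_le.mp (Finset.mem_Iic.not.mp hj))
  rw [stirlingSecond_eq_zero_of_lt hij, mul_zero, mul_zero]
end
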